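/- With d(α) the degree defined recursively (d of the identity of S_1 is 2; d([α,0]) = d(α)+1; d([α,j]) = d(α)+1 if j is in the cycle of α containing 1; d([α,j]) = d(α)-1 otherwise), a permutation α ∈ S_n attains the maximal degree d(α) = n+1 if and only if α satisfies condition (*): every cycle of its functional graph has exactly one arrow with source smaller than target, and the cycles are pairwise non-crossing. -/

import Mathlib

/-!
A permutation satisfies (*) exactly when every cycle runs down through its elements from its
maximum to its minimum and then jumps back, and the cycles form a noncrossing partition.
Writing `L` for `α` extended by the fixed point `last`, one has
`[α, j] = swap last J * (swap last (L 0) * L)`, where `J = last` if `j = 0` and `J = j`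
otherwise; left multiplication by `swap last J` merges the cycles through `last` and `J`, or
splits their common cycle. The first factor merges the orbit of `0` with the fixed point
`last`. If `0` and `last` lie in different orbits of a (*)-permutation, the orbit of `0` lies
entirely below that of `last` (otherwise they cross), so merging them preserves (*); conversely
the (*)-cycle through `0` and `last` is `0 → last ↘ 0`, and cutting it at `J` leaves its
elements `≤ J` and its elements `> J`, again satisfying (*). So a good insertion preserves and
reflects (*). A bad one produces a cycle through `0` and `last` in which `0 ↦ J ≠ last`, which
has a second ascent. As every permutation of `S_{n+1}` is some `[α, j]`, induction shows
`d ≤ n + 2`, with equality exactly on (*).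
-/

/-- Two subsets of `{0, ..., m-1}` cross if there are `a < b < c < d` with
`a, c` in the first and `b, d` in the second. -/
def Crossing {m : ℕ} (A B : Set (Fin m)) : Prop :=
  ∃ a b c d : Fin m, a < b ∧ b < c ∧ c < d ∧ a ∈ A ∧ c ∈ A ∧ b ∈ B ∧ d ∈ B

/-- Condition (*): every (nontrivial) cycle of the functional graph of `α`
(arrows `i → α i`) has exactly one ascent arrow (source smaller than target), and the
orbits of `α` (cycles, counting fixed points) are pairwise non-crossing. -/
def SatisfiesStar {m : ℕ} (α : Equiv.Perm (Fin m)) : Prop :=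
  (∀ c ∈ α.cycleFactorsFinset, (c.support.filter fun i => i < c i).card = 1) ∧
  ∀ x y : Fin m, ¬ α.SameCycle x y →
    ¬ Crossing {z | α.SameCycle x z} {z | α.SameCycle y z}

/-- Number of cycles of `α`, counting fixed points as 1-cycles. -/
def cycleCount {m : ℕ} (α : Equiv.Perm (Fin m)) : ℕ :=
  Multiset.card α.cycleType + (Finset.univ.filter fun x => α x = x).card

/-- Extension of `α ∈ S_m` to `S_{m+1}` fixing the new top element `Fin.last m`. -/
def liftPerm {m : ℕ} (α : Equiv.Perm (Fin m)) : Equiv.Perm (Fin (m + 1)) :=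
  finSuccEquivLast.symm.permCongr α.optionCongr

/-- The "Case 0" construction `[α, 0]`: extend the chain of `Q̂_α` by a new arrow at the
top (here `0` plays the role of the paper's distinguished element `1`, and
`Fin.last m` the role of the new element `n+1`): the resulting permutation sends
`0 ↦ last`, `last ↦ α 0`, and agrees with `α` elsewhere. -/
def chainExt {m : ℕ} (α : Equiv.Perm (Fin m)) : Equiv.Perm (Fin (m + 1)) :=
  liftPerm α * Equiv.swap 0 (Fin.last m)

/-- The cut-and-reconnect construction `[α, j]`: `insPerm α none = [α, 0]` (Case 0),
and for a target `j` of `Q̂_α`, `insPerm α (some j)` cuts the arrow `i → j` of `Q̂_α`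
and reconnects via new arrows (virtual vertex) `→ j` and `i →` (new top vertex). -/
def insPerm {m : ℕ} (α : Equiv.Perm (Fin m)) : Option (Fin m) → Equiv.Perm (Fin (m + 1))
  | none => chainExt α
  | some j => Equiv.swap (Fin.last m) j.castSucc * chainExt α


open Equiv Equiv.Perm

namespace Equiv.Perm

variable {ι : Type*} [Finite ι] {σ τ : Perm ι} {x y : ι}

theorem SameCycle.mem_iff_of_mapsTo {s : Set ι} (hs : Set.MapsTo σ s s) (h : σ.SameCycle x y) :
    x ∈ s ↔ y ∈ s := by
  have forward : ∀ {u v}, σ.SameCycle u v → u ∈ s → v ∈ s := by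
    intro u v huv hu
    obtain ⟨k, -, rfl⟩ := huv.exists_pow_eq'
    rw [coe_pow]
    exact hs.iterate k hu
  exact ⟨forward h, forward h.symm⟩

theorem SameCycle.of_eqOn (h : σ.SameCycle x y)
    (heq : ∀ z, σ.SameCycle x z → z ≠ y → τ z = σ z) : τ.SameCycle x y := by
  obtain ⟨k, -, rfl⟩ := h.exists_pow_eq'
  clear h
  induction k generalizing x with
  | zero => rfl
  | succ k ih =>
    rw [pow_succ, mul_apply] at heq ⊢
    by_cases hx : x = (σ ^ k) (σ x)
    · exact hx ▸ SameCycle.rfl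
    have hstep : τ.SameCycle x (σ x) := by
      rw [← heq x SameCycle.rfl hx]
      exact SameCycle.rfl.apply_right
    exact hstep.trans (ih fun z hz => heq z (SameCycle.rfl.apply_right.trans hz))

variable [DecidableEq ι] {a b : ι}

theorem SameCycle.of_swap_mul_or (h : (swap a b * σ).SameCycle x y) :
    σ.SameCycle x y ∨
      ((σ.SameCycle a x ∨ σ.SameCycle b x) ∧ (σ.SameCycle a y ∨ σ.SameCycle b y)) := by
  set U := {z | σ.SameCycle a z ∨ σ.SameCycle b z}
  by_cases hx : x ∈ U
  · refine Or.inr ⟨hx, (h.mem_iff_of_mapsTo fun z hz => ?_).1 hx⟩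
    have hσz : σ z ∈ U := by simpa [U] using hz
    rw [mul_apply]
    rcases eq_or_ne (σ z) a with hza | hza
    · simp [hza, U, SameCycle.rfl]
    rcases eq_or_ne (σ z) b with hzb | hzb
    · simp [hzb, U, SameCycle.rfl]
    rwa [swap_apply_of_ne_of_ne hza hzb]
  · refine Or.inl ((h.mem_iff_of_mapsTo (s := {z | σ.SameCycle x z}) fun z hz => ?_).1
      SameCycle.rfl)
    have hz : σ.SameCycle x z := hz
    have hσz : σ z ∉ U := fun h' => hx <| by
      rcases h' with h' | h'
      · exact Or.inl (h'.of_apply_right.trans hz.symm)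
      · exact Or.inr (h'.of_apply_right.trans hz.symm)
    have hza : σ z ≠ a := fun h' => hσz (Or.inl (h' ▸ SameCycle.rfl))
    have hzb : σ z ≠ b := fun h' => hσz (Or.inr (h' ▸ SameCycle.rfl))
    show σ.SameCycle x _
    rw [mul_apply, swap_apply_of_ne_of_ne hza hzb]
    exact hz.apply_right

theorem SameCycle.of_swap_mul (h : (swap a b * σ).SameCycle x y) (hab : σ.SameCycle a b) :
    σ.SameCycle x y := by
  rcases h.of_swap_mul_or with h | ⟨hx | hx, hy | hy⟩
  · exact h
  · exact hx.symm.trans hy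
  · exact hx.symm.trans (hab.trans hy)
  · exact hx.symm.trans (hab.symm.trans hy)
  · exact hx.symm.trans hy

theorem sameCycle_swap_mul_of_not_sameCycle (hab : ¬σ.SameCycle a b) :
    (swap a b * σ).SameCycle a b := by
  have hpre : (swap a b * σ).SameCycle a (σ⁻¹ a) := by
    refine SameCycle.of_eqOn SameCycle.rfl.symm_apply_right fun z hz hz' => ?_
    have hza : σ z ≠ a := fun h' => hz' (by simp [← h'])
    have hzb : σ z ≠ b := fun h' => hab (h' ▸ hz.apply_right)
    rw [mul_apply, swap_apply_of_ne_of_ne hza hzb]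
  have hstep : (swap a b * σ) (σ⁻¹ a) = b := by simp
  simpa only [hstep] using hpre.apply_right

end Equiv.Perm

section Star

variable {m : ℕ}

def AscentUnique (σ : Perm (Fin m)) : Prop :=
  ∀ x y, σ.SameCycle x y → x < σ x → y < σ y → x = y

def OrbitsNoncrossing (σ : Perm (Fin m)) : Prop :=
  ∀ a b c d, a < b → b < c → c < d → σ.SameCycle a c → σ.SameCycle b d →
    σ.SameCycle a b

structure IsStar (σ : Perm (Fin m)) : Prop where
  ascentUnique : AscentUnique σ
  orbitsNoncrossing : OrbitsNoncrossing σ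

theorem satisfiesStar_iff_isStar {σ : Perm (Fin m)} : SatisfiesStar σ ↔ IsStar σ := by
  constructor
  · rintro ⟨hasc, hcross⟩
    refine ⟨fun x y hxy hx hy => ?_, fun a b c d hab hbc hcd hac hbd => ?_⟩
    · have hxs : x ∈ σ.support := mem_support.2 hx.ne'
      have hmem : ∀ z, σ.SameCycle x z → z < σ z →
          z ∈ (σ.cycleOf x).support.filter fun i => i < σ.cycleOf x i := fun z hz hzlt =>
        Finset.mem_filter.2 ⟨mem_support_cycleOf_iff.2 ⟨hz, hxs⟩, by rwa [hz.cycleOf_apply]⟩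
      exact Finset.card_le_one.1 (hasc _ (cycleOf_mem_cycleFactorsFinset_iff.2 hxs)).le
        x (hmem x SameCycle.rfl hx) y (hmem y hxy hy)
    · by_contra hab'
      exact hcross a b hab' ⟨a, b, c, d, hab, hbc, hcd, SameCycle.rfl, hac, SameCycle.rfl, hbd⟩
  · rintro ⟨hasc, hcross⟩
    refine ⟨fun c hc => le_antisymm (Finset.card_le_one.2 ?_) (Finset.card_pos.2 ?_), ?_⟩
    · intro u hu v hv
      rw [Finset.mem_filter] at hu hv
      have hfac := (mem_cycleFactorsFinset_iff.1 hc).2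
      rw [hfac u hu.1] at hu
      rw [hfac v hv.1, cycle_is_cycleOf hu.1 hc] at hv
      exact hasc u v (mem_support_cycleOf_iff.1 hv.1).1 hu.2 hv.2
    · -- the minimum of a nontrivial cycle is an ascent
      have hne := (mem_cycleFactorsFinset_iff.1 hc).1.nonempty_support
      have hmin := c.support.min'_mem hne
      refine ⟨c.support.min' hne, Finset.mem_filter.2 ⟨hmin, ?_⟩⟩
      exact lt_of_le_of_ne (c.support.min'_le _ (apply_mem_support.2 hmin))
        (mem_support.1 hmin).symm
    · rintro x y hxy ⟨a, b, c, d, hab, hbc, hcd, hxa, hxc, hyb, hyd⟩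
      exact hxy (hxa.trans ((hcross a b c d hab hbc hcd (hxa.symm.trans hxc)
        (hyb.symm.trans hyd)).trans hyb.symm))

theorem isStar_fin_one (σ : Perm (Fin 1)) : IsStar σ :=
  ⟨fun x _ _ hx => absurd hx (Subsingleton.elim x (σ x)).not_lt,
    fun a b _ _ hab => absurd hab (Subsingleton.elim a b).not_lt⟩

theorem AscentUnique.apply_lt_of_sameCycle {σ : Perm (Fin m)} {x y : Fin m} (h : AscentUnique σ)
    (hx : x < σ x) (hxy : σ.SameCycle x y) (hyx : y ≠ x) : σ y < y :=
  lt_of_le_of_ne (not_lt.1 fun hy => hyx (h x y hxy hx hy).symm)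
    fun hfix => hyx (hxy.eq_of_right hfix).symm

end Star

section Extremes

variable {n : ℕ} {σ : Perm (Fin (n + 2))} {u : Fin (n + 2)}

theorem AscentUnique.eq_zero_of_lt_apply (h : AscentUnique σ) (hu : σ.SameCycle 0 u)
    (hlt : u < σ u) : u = 0 := by
  by_cases h0 : σ 0 = 0
  · exact (hu.eq_of_left h0).symm
  · exact (h 0 u hu (Fin.pos_iff_ne_zero.2 h0) hlt).symm

theorem AscentUnique.apply_eq_last_of_lt_apply (h : AscentUnique σ)
    (hu : σ.SameCycle u (Fin.last _)) (hlt : u < σ u) : σ u = Fin.last _ := by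
  by_cases hl : σ (Fin.last _) = Fin.last _
  · rw [hu.eq_of_right hl, hl]
  · obtain ⟨p, hσp⟩ := σ.surjective (Fin.last _)
    have hp : p < σ p := by
      rw [hσp]
      exact Fin.lt_last_iff_ne_last.2 fun hp => hl (hp ▸ hσp)
    have hup : σ.SameCycle u p := hu.trans (hσp ▸ SameCycle.rfl.apply_right).symm
    rw [h u p hup hlt hp, hσp]

theorem AscentUnique.apply_zero_eq_last (h : AscentUnique σ)
    (h0 : σ.SameCycle 0 (Fin.last _)) : σ 0 = Fin.last _ :=
  h.apply_eq_last_of_lt_apply h0 <| Fin.pos_iff_ne_zero.2 fun hfix =>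
    Fin.last_pos.ne (h0.eq_of_left hfix)

theorem OrbitsNoncrossing.lt_of_sameCycle_zero_of_sameCycle_last (hN : OrbitsNoncrossing σ)
    (h : ¬σ.SameCycle 0 (Fin.last _)) {l : Fin (n + 2)} (hl : σ.SameCycle 0 l)
    (hu : σ.SameCycle u (Fin.last _)) : l < u := by
  have hlu : l ≠ u := fun hlu => h (hl.trans (hlu ▸ hu))
  have hu0 : u ≠ 0 := fun hu0 => h (hu0 ▸ hu)
  have hll : l ≠ Fin.last _ := fun hll => h (hll ▸ hl)
  by_contra hle
  exact h ((hN 0 u l (Fin.last _) (Fin.pos_iff_ne_zero.2 hu0)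
    (lt_of_le_of_ne (not_lt.1 hle) hlu.symm) (Fin.lt_last_iff_ne_last.2 hll) hl hu).trans hu)

end Extremes

section Split

variable {n : ℕ} {γ : Perm (Fin (n + 2))} {J c : Fin (n + 2)}

theorem swap_last_mul_apply_of_ne (h0 : γ 0 = Fin.last _) (hc : c ≠ 0) (hcJ : γ c ≠ J) :
    (swap (Fin.last _) J * γ) c = γ c := by
  rw [mul_apply, swap_apply_of_ne_of_ne (h0 ▸ γ.injective.ne hc) hcJ]

theorem swap_last_mul_apply_of_not_sameCycle (h0 : γ 0 = Fin.last _) (hJ : γ.SameCycle 0 J)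
    (hc : ¬γ.SameCycle 0 c) : (swap (Fin.last _) J * γ) c = γ c :=
  swap_last_mul_apply_of_ne h0 (fun hc0 => hc (hc0 ▸ SameCycle.rfl))
    fun hcJ => hc (hJ.trans (hcJ ▸ SameCycle.rfl.apply_right).symm)

theorem AscentUnique.apply_lt_of_sameCycle_zero (hA : AscentUnique γ) (h0 : γ 0 = Fin.last _)
    (hc : γ.SameCycle 0 c) (hc0 : c ≠ 0) : γ c < c :=
  hA.apply_lt_of_sameCycle (h0 ▸ Fin.last_pos) hc hc0

theorem AscentUnique.apply_eq_of_lt_swap_last_mul_apply (hA : AscentUnique γ)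
    (h0 : γ 0 = Fin.last _) (hc : γ.SameCycle 0 c) (hc0 : c ≠ 0)
    (hlt : c < (swap (Fin.last _) J * γ) c) : γ c = J := by
  by_contra hcJ
  rw [swap_last_mul_apply_of_ne h0 hc0 hcJ] at hlt
  exact hlt.not_gt (hA.apply_lt_of_sameCycle_zero h0 hc hc0)

theorem AscentUnique.eq_zero_of_lt_swap_last_mul_apply (hA : AscentUnique γ)
    (h0 : γ 0 = Fin.last _) (hc : γ.SameCycle 0 c) (hcJ : c ≤ J)
    (hlt : c < (swap (Fin.last _) J * γ) c) : c = 0 :=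
  by_contra fun hc0 => hcJ.not_gt <|
    hA.apply_eq_of_lt_swap_last_mul_apply h0 hc hc0 hlt ▸ hA.apply_lt_of_sameCycle_zero h0 hc hc0

theorem AscentUnique.mapsTo_swap_last_mul (hA : AscentUnique γ) (h0 : γ 0 = Fin.last _)
    (hJ : γ.SameCycle 0 J) :
    Set.MapsTo (swap (Fin.last _) J * γ) {c | γ.SameCycle 0 c ∧ c ≤ J}
      {c | γ.SameCycle 0 c ∧ c ≤ J} := by
  rintro c ⟨hc, hcJ⟩
  rcases eq_or_ne c 0 with rfl | hc0
  · simp [h0, hJ]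
  have hlt := (hA.apply_lt_of_sameCycle_zero h0 hc hc0).trans_le hcJ
  rw [swap_last_mul_apply_of_ne h0 hc0 hlt.ne]
  exact ⟨hc.apply_right, hlt.le⟩

/- For a cycle `0 → last → ⋯ → 0` that descends after its first step, `swap last J` cuts it
into the cycle of its elements `≤ J`, closed by `0 ↦ J`, and that of its elements `> J`,
closed by `γ⁻¹ J ↦ last`. -/
theorem AscentUnique.sameCycle_swap_last_mul_zero (hA : AscentUnique γ) (h0 : γ 0 = Fin.last _)
    (hc : γ.SameCycle 0 c) (hcJ : c ≤ J) : (swap (Fin.last _) J * γ).SameCycle c 0 := by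
  induction c using WellFoundedLT.induction with
  | ind c ih =>
    rcases eq_or_ne c 0 with rfl | hc0
    · rfl
    have hlt := hA.apply_lt_of_sameCycle_zero h0 hc hc0
    have hstep := (SameCycle.refl (swap (Fin.last _) J * γ) c).apply_right
    rw [swap_last_mul_apply_of_ne h0 hc0 (hlt.trans_le hcJ).ne] at hstep
    exact hstep.trans (ih _ hlt hc.apply_right (hlt.trans_le hcJ).le)

theorem AscentUnique.sameCycle_swap_last_mul_last (hA : AscentUnique γ) (h0 : γ 0 = Fin.last _)
    (hJ : γ.SameCycle 0 J) (hc : γ.SameCycle 0 c) (hJc : J < c) :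
    (swap (Fin.last _) J * γ).SameCycle c (Fin.last _) := by
  induction c using WellFoundedLT.induction with
  | ind c ih =>
    have hc0 : c ≠ 0 := (Fin.zero_le J |>.trans_lt hJc).ne'
    have hstep := (SameCycle.refl (swap (Fin.last _) J * γ) c).apply_right
    rcases eq_or_ne (γ c) J with hcJ | hcJ
    · rwa [mul_apply, hcJ, swap_apply_right] at hstep
    rw [swap_last_mul_apply_of_ne h0 hc0 hcJ] at hstep
    -- `γ c` stays above `J`, since the part `≤ J` is invariant
    refine hstep.trans (ih _ (hA.apply_lt_of_sameCycle_zero h0 hc hc0) hc.apply_right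
      (lt_of_not_ge fun hle => hJc.not_ge ?_))
    exact ((hstep.mem_iff_of_mapsTo (hA.mapsTo_swap_last_mul h0 hJ)).2 ⟨hc.apply_right, hle⟩).2

theorem sameCycle_swap_last_mul_of_not_sameCycle (h0 : γ 0 = Fin.last _) (hJ : γ.SameCycle 0 J)
    {x y : Fin (n + 2)} (hx : ¬γ.SameCycle 0 x) (hxy : γ.SameCycle x y) :
    (swap (Fin.last _) J * γ).SameCycle x y :=
  hxy.of_eqOn fun _ hz _ =>
    swap_last_mul_apply_of_not_sameCycle h0 hJ fun h => hx (h.trans hz.symm)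

theorem AscentUnique.swap_last_mul (hA : AscentUnique γ) (h0 : γ 0 = Fin.last _)
    (hJ : γ.SameCycle 0 J) : AscentUnique (swap (Fin.last _) J * γ) := by
  have hlastJ : γ.SameCycle (Fin.last _) J := (h0 ▸ SameCycle.rfl.apply_right).symm.trans hJ
  intro x y hxy hx hy
  have hxyγ := hxy.of_swap_mul hlastJ
  by_cases hx0 : γ.SameCycle 0 x
  · have hy0 := hx0.trans hxyγ
    have hxyS := hxy.mem_iff_of_mapsTo (hA.mapsTo_swap_last_mul h0 hJ)
    rcases le_or_gt x J with hxJ | hJx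
    · have hyJ : y ≤ J := (hxyS.1 ⟨hx0, hxJ⟩).2
      rw [hA.eq_zero_of_lt_swap_last_mul_apply h0 hx0 hxJ hx,
        hA.eq_zero_of_lt_swap_last_mul_apply h0 hy0 hyJ hy]
    · have hJy : J < y := lt_of_not_ge fun hyJ => hJx.not_ge (hxyS.2 ⟨hy0, hyJ⟩).2
      have hne : ∀ {u}, J < u → u ≠ 0 := fun hJu => (Fin.zero_le J |>.trans_lt hJu).ne'
      exact γ.injective ((hA.apply_eq_of_lt_swap_last_mul_apply h0 hx0 (hne hJx) hx).trans
        (hA.apply_eq_of_lt_swap_last_mul_apply h0 hy0 (hne hJy) hy).symm)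
  · have hy0 : ¬γ.SameCycle 0 y := fun hy0 => hx0 (hy0.trans hxyγ.symm)
    rw [swap_last_mul_apply_of_not_sameCycle h0 hJ hx0] at hx
    rw [swap_last_mul_apply_of_not_sameCycle h0 hJ hy0] at hy
    exact hA x y hxyγ hx hy

theorem IsStar.orbitsNoncrossing_swap_last_mul (hγ : IsStar γ) (h0 : γ 0 = Fin.last _)
    (hJ : γ.SameCycle 0 J) : OrbitsNoncrossing (swap (Fin.last _) J * γ) := by
  have hA := hγ.ascentUnique
  have hlastJ : γ.SameCycle (Fin.last _) J := (h0 ▸ SameCycle.rfl.apply_right).symm.trans hJ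
  intro a b c d hab hbc hcd hac hbd
  have hab' : γ.SameCycle a b := hγ.orbitsNoncrossing a b c d hab hbc hcd
    (hac.of_swap_mul hlastJ) (hbd.of_swap_mul hlastJ)
  by_cases ha0 : γ.SameCycle 0 a
  · have hb0 := ha0.trans hab'
    rcases le_or_gt a J with haJ | hJa <;> rcases le_or_gt b J with hbJ | hJb
    · exact (hA.sameCycle_swap_last_mul_zero h0 ha0 haJ).trans
        (hA.sameCycle_swap_last_mul_zero h0 hb0 hbJ).symm
    · have hcJ := ((hac.mem_iff_of_mapsTo (hA.mapsTo_swap_last_mul h0 hJ)).1 ⟨ha0, haJ⟩).2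
      exact absurd hcJ (hJb.trans hbc).not_ge
    · exact absurd (hJa.trans hab) hbJ.not_gt
    · exact (hA.sameCycle_swap_last_mul_last h0 hJ ha0 hJa).trans
        (hA.sameCycle_swap_last_mul_last h0 hJ hb0 hJb).symm
  · exact sameCycle_swap_last_mul_of_not_sameCycle h0 hJ ha0 hab'

theorem IsStar.swap_last_mul (hγ : IsStar γ) (h0 : γ 0 = Fin.last _) (hJ : γ.SameCycle 0 J) :
    IsStar (swap (Fin.last _) J * γ) :=
  ⟨hγ.ascentUnique.swap_last_mul h0 hJ, hγ.orbitsNoncrossing_swap_last_mul h0 hJ⟩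

end Split

section Merge

variable {n : ℕ} {β : Perm (Fin (n + 2))} {x y : Fin (n + 2)}

theorem sameCycle_swap_last_mul_apply_zero (h : ¬β.SameCycle 0 (Fin.last _)) :
    (swap (Fin.last _) (β 0) * β).SameCycle (Fin.last _) (β 0) :=
  sameCycle_swap_mul_of_not_sameCycle fun h' => h h'.of_apply_right.symm

theorem Equiv.Perm.SameCycle.swap_last_mul_apply_zero (h : ¬β.SameCycle 0 (Fin.last _))
    (hxy : β.SameCycle x y) : (swap (Fin.last _) (β 0) * β).SameCycle x y :=
  SameCycle.of_swap_mul (by rwa [swap_mul_self_mul]) (sameCycle_swap_last_mul_apply_zero h)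

theorem Equiv.Perm.SameCycle.of_swap_last_mul_apply_zero
    (hxy : (swap (Fin.last _) (β 0) * β).SameCycle x y) :
    β.SameCycle x y ∨ ((β.SameCycle 0 x ∨ β.SameCycle x (Fin.last _)) ∧
      (β.SameCycle 0 y ∨ β.SameCycle y (Fin.last _))) := by
  refine hxy.of_swap_mul_or.imp_right fun hU => ?_
  simp only [sameCycle_apply_left, sameCycle_comm (x := Fin.last _)] at hU
  exact ⟨hU.1.symm, hU.2.symm⟩

theorem sameCycle_swap_last_mul_apply_zero_of_or (h : ¬β.SameCycle 0 (Fin.last _))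
    (hx : β.SameCycle 0 x ∨ β.SameCycle x (Fin.last _)) :
    (swap (Fin.last _) (β 0) * β).SameCycle 0 x := by
  rcases hx with hx | hx
  · exact hx.swap_last_mul_apply_zero h
  · have h0 : (swap (Fin.last _) (β 0) * β).SameCycle 0 (Fin.last _) := by
      simpa using (SameCycle.refl (swap (Fin.last _) (β 0) * β) 0).apply_right
    exact h0.trans (hx.swap_last_mul_apply_zero h).symm

theorem IsStar.eq_zero_of_lt_swap_last_mul_apply_zero (hβ : IsStar β)
    (h : ¬β.SameCycle 0 (Fin.last _)) (hx : β.SameCycle 0 x ∨ β.SameCycle x (Fin.last _))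
    (hlt : x < (swap (Fin.last _) (β 0) * β) x) : x = 0 := by
  by_contra hx0
  rw [mul_apply] at hlt
  rcases hx with hx | hx
  · have hxl : β x ≠ Fin.last _ := fun hl => h (hx.trans (hl ▸ SameCycle.rfl.apply_right))
    rw [swap_apply_of_ne_of_ne hxl (β.injective.ne hx0)] at hlt
    exact hx0 (hβ.ascentUnique.eq_zero_of_lt_apply hx hlt)
  · by_cases hxl : β x = Fin.last _
    · rw [hxl, swap_apply_left] at hlt
      exact hlt.not_gt (hβ.orbitsNoncrossing.lt_of_sameCycle_zero_of_sameCycle_last h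
        SameCycle.rfl.apply_right hx)
    · rw [swap_apply_of_ne_of_ne hxl (β.injective.ne hx0)] at hlt
      exact hxl (hβ.ascentUnique.apply_eq_last_of_lt_apply hx hlt)

theorem IsStar.ascentUnique_swap_last_mul_apply_zero (hβ : IsStar β)
    (h : ¬β.SameCycle 0 (Fin.last _)) : AscentUnique (swap (Fin.last _) (β 0) * β) := by
  intro x y hxy hx hy
  by_cases hxU : β.SameCycle 0 x ∨ β.SameCycle x (Fin.last _)
  · have hyU : β.SameCycle 0 y ∨ β.SameCycle y (Fin.last _) :=
      (hxy.of_swap_last_mul_apply_zero).elim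
        (fun hxy => hxU.imp (·.trans hxy) hxy.symm.trans) And.right
    rw [hβ.eq_zero_of_lt_swap_last_mul_apply_zero h hxU hx,
      hβ.eq_zero_of_lt_swap_last_mul_apply_zero h hyU hy]
  · have hxyβ : β.SameCycle x y := hxy.of_swap_last_mul_apply_zero.resolve_right (hxU ·.1)
    have hyU : ¬(β.SameCycle 0 y ∨ β.SameCycle y (Fin.last _)) := fun hyU =>
      hxU (hyU.imp (·.trans hxyβ.symm) hxyβ.trans)
    have hfix : ∀ {z}, ¬(β.SameCycle 0 z ∨ β.SameCycle z (Fin.last _)) →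
        (swap (Fin.last _) (β 0) * β) z = β z := fun hz =>
      swap_apply_of_ne_of_ne (fun hl => hz (Or.inr (hl ▸ SameCycle.rfl.apply_right)))
        (β.injective.ne fun hz0 => hz (Or.inl (hz0 ▸ SameCycle.rfl)))
    exact hβ.ascentUnique x y hxyβ (hfix hxU ▸ hx) (hfix hyU ▸ hy)

theorem OrbitsNoncrossing.swap_last_mul_apply_zero (hN : OrbitsNoncrossing β)
    (h : ¬β.SameCycle 0 (Fin.last _)) : OrbitsNoncrossing (swap (Fin.last _) (β 0) * β) := by
  set U : Fin (n + 2) → Prop := fun z => β.SameCycle 0 z ∨ β.SameCycle z (Fin.last _)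
  intro a b c d hab hbc hcd hac hbd
  by_contra hab'
  have hβab : ¬β.SameCycle a b := fun h' => hab' (h'.swap_last_mul_apply_zero h)
  have hUab : ¬(U a ∧ U b) := fun ⟨ha, hb⟩ => hab'
    ((sameCycle_swap_last_mul_apply_zero_of_or h ha).symm.trans
      (sameCycle_swap_last_mul_apply_zero_of_or h hb))
  have hsep : ∀ {l u}, β.SameCycle 0 l → β.SameCycle u (Fin.last _) → l < u :=
    hN.lt_of_sameCycle_zero_of_sameCycle_last h
  rcases hac.of_swap_last_mul_apply_zero with hac' | ⟨haU, hcU⟩ <;>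
    rcases hbd.of_swap_last_mul_apply_zero with hbd' | ⟨hbU, hdU⟩
  · exact hβab (hN a b c d hab hbc hcd hac' hbd')
  · have haU : ¬U a := fun ha => hUab ⟨ha, hbU⟩
    rcases hbU with hb | hb <;> rcases hdU with hd | hd
    · exact hβab (hN a b c d hab hbc hcd hac' (hb.symm.trans hd))
    · -- `(0, a, b, c)` would cross
      have ha0 : a ≠ 0 := fun ha0 => haU (Or.inl (ha0 ▸ SameCycle.rfl))
      exact haU (Or.inl (hN 0 a b c (Fin.pos_iff_ne_zero.2 ha0) hab hbc hb hac'))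
    · exact absurd (hsep hd hb) (hbc.trans hcd).not_gt
    · exact hβab (hN a b c d hab hbc hcd hac' (hb.trans hd.symm))
  · have hbU : ¬U b := fun hb => hUab ⟨haU, hb⟩
    have hdl : d ≠ Fin.last _ := fun hdl => hbU (Or.inr (hdl ▸ hbd'))
    rcases haU with ha | ha <;> rcases hcU with hc | hc
    · exact hβab (hN a b c d hab hbc hcd (ha.symm.trans hc) hbd')
    · -- `(b, c, d, last)` would cross
      exact hbU (Or.inr ((hN b c d (Fin.last _) hbc hcd (Fin.lt_last_iff_ne_last.2 hdl)
        hbd' hc).trans hc))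
    · exact absurd (hsep hc ha) (hab.trans hbc).not_gt
    · exact hβab (hN a b c d hab hbc hcd (ha.trans hc.symm) hbd')
  · exact hUab ⟨haU, hbU⟩

theorem IsStar.swap_last_mul_apply_zero (hβ : IsStar β) (h : ¬β.SameCycle 0 (Fin.last _)) :
    IsStar (swap (Fin.last _) (β 0) * β) :=
  ⟨hβ.ascentUnique_swap_last_mul_apply_zero h,
    hβ.orbitsNoncrossing.swap_last_mul_apply_zero h⟩

end Merge

section SwapLast

variable {n : ℕ} {γ : Perm (Fin (n + 2))} {J : Fin (n + 2)}

theorem isStar_swap_last_mul_iff (h0 : γ 0 = Fin.last _) (hJ : γ.SameCycle 0 J) :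
    IsStar (swap (Fin.last _) J * γ) ↔ IsStar γ := by
  refine ⟨fun hβ => ?_, fun hγ => hγ.swap_last_mul h0 hJ⟩
  have hβ0 : (swap (Fin.last _) J * γ) 0 = J := by simp [h0]
  by_cases hJl : J = Fin.last _
  · rwa [hJl, swap_self, ← Perm.one_def, one_mul] at hβ
  have hsplit : ¬(swap (Fin.last _) J * γ).SameCycle 0 (Fin.last _) := fun h' =>
    hJl (hβ0 ▸ hβ.ascentUnique.apply_zero_eq_last h')
  simpa only [hβ0, swap_mul_self_mul] using hβ.swap_last_mul_apply_zero hsplit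

theorem not_ascentUnique_swap_last_mul (h0 : γ 0 = Fin.last _)
    (hJ : ¬γ.SameCycle (Fin.last _) J) : ¬AscentUnique (swap (Fin.last _) J * γ) := by
  intro hA
  have hβ0 : (swap (Fin.last _) J * γ) 0 = J := by simp [h0]
  have h0l : (swap (Fin.last _) J * γ).SameCycle 0 (Fin.last _) :=
    (hβ0 ▸ SameCycle.rfl.apply_right).trans (sameCycle_swap_mul_of_not_sameCycle hJ).symm
  have hJl := hA.apply_zero_eq_last h0l
  rw [hβ0] at hJl
  exact hJ (hJl ▸ SameCycle.rfl)

end SwapLast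


section Constructions

variable {n : ℕ} (α : Perm (Fin (n + 1)))

theorem liftPerm_eq_extendDomain :
    liftPerm α = α.extendDomain (finSuccAboveEquiv (Fin.last _)) := by
  ext z
  induction z using Fin.lastCases with
  | last => simp [liftPerm, extendDomain_apply_not_subtype]
  | cast x =>
    have := extendDomain_apply_image α (finSuccAboveEquiv (Fin.last _)) x
    simp only [finSuccAboveEquiv_apply, Fin.succAbove_last] at this
    simp [liftPerm, this]

@[simp]
theorem liftPerm_castSucc (x : Fin (n + 1)) : liftPerm α x.castSucc = (α x).castSucc := by
  simp [liftPerm]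

@[simp]
theorem liftPerm_last : liftPerm α (Fin.last _) = Fin.last _ := by
  simp [liftPerm]

theorem sameCycle_liftPerm_castSucc_iff {x y : Fin (n + 1)} :
    (liftPerm α).SameCycle x.castSucc y.castSucc ↔ α.SameCycle x y := by
  have := sameCycle_extendDomain (g := α) (f := finSuccAboveEquiv (Fin.last (n + 1)))
    (x := x) (y := y)
  simpa only [← liftPerm_eq_extendDomain, finSuccAboveEquiv_apply, Fin.succAbove_last] using this

theorem chainExt_eq_swap_mul : chainExt α = swap (Fin.last _) (liftPerm α 0) * liftPerm α := by
  rw [chainExt, swap_mul_eq_mul_swap, swap_comm]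
  congr 2 <;> simp [Equiv.eq_symm_apply]

@[simp]
theorem chainExt_zero : chainExt α 0 = Fin.last _ := by
  simp [chainExt]

theorem insPerm_eq_swap_mul (j : Option (Fin (n + 1))) :
    insPerm α j = swap (Fin.last _) (finSuccEquivLast.symm j) * chainExt α := by
  cases j <;> simp [insPerm, Perm.one_def]

@[simp]
theorem chainExt_last : chainExt α (Fin.last _) = liftPerm α 0 := by
  simp [chainExt]

theorem sameCycle_chainExt_zero_last : (chainExt α).SameCycle 0 (Fin.last _) :=
  chainExt_zero α ▸ SameCycle.rfl.apply_right

theorem sameCycle_chainExt_last_iff (j : Option (Fin (n + 1))) :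
    (chainExt α).SameCycle (Fin.last _) (finSuccEquivLast.symm j) ↔
      (j = none ∨ ∃ j', j = some j' ∧ α.SameCycle 0 j') := by
  cases j with
  | none => simp [SameCycle.rfl]
  | some j =>
    have hlast : ∀ {z}, (liftPerm α).SameCycle (Fin.last _) z → z = Fin.last _ := fun hz =>
      (hz.eq_of_left (liftPerm_last α)).symm
    have hj : j.castSucc ≠ Fin.last _ := (Fin.castSucc_lt_last j).ne
    simp only [finSuccEquivLast_symm_some, reduceCtorEq, Option.some.injEq, exists_eq_left',
      false_or]
    rw [← sameCycle_liftPerm_castSucc_iff α (x := 0), Fin.castSucc_zero]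
    constructor
    · intro h
      rw [chainExt_eq_swap_mul] at h
      rcases h.of_swap_mul_or with h | ⟨-, h | h⟩
      · exact absurd (hlast h) hj
      · exact absurd (hlast h) hj
      · exact h.of_apply_left
    · intro h
      refine (sameCycle_chainExt_zero_last α).symm.trans (SameCycle.of_swap_mul (σ := chainExt α)
        (a := Fin.last _) (b := liftPerm α 0) ?_ ?_)
      · rwa [chainExt_eq_swap_mul, swap_mul_self_mul]
      · exact chainExt_last α ▸ SameCycle.rfl.apply_right

theorem isStar_liftPerm_iff : IsStar (liftPerm α) ↔ IsStar α := by
  have hcs : ∀ {a b : Fin (n + 2)}, a < b → ∃ x : Fin (n + 1), x.castSucc = a := fun hab =>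
    Fin.exists_castSucc_eq.2 (Fin.lt_last_iff_ne_last.1 (hab.trans_le (Fin.le_last _)))
  constructor
  · intro hL
    refine ⟨fun x y hxy hx hy => Fin.castSucc_injective _ ?_,
      fun a b c d hab hbc hcd hac hbd => ?_⟩
    · exact hL.ascentUnique _ _ ((sameCycle_liftPerm_castSucc_iff α).2 hxy) (by simpa using hx)
        (by simpa using hy)
    · refine (sameCycle_liftPerm_castSucc_iff α).1 (hL.orbitsNoncrossing _ _ _ _ ?_ ?_ ?_
        ((sameCycle_liftPerm_castSucc_iff α).2 hac) ((sameCycle_liftPerm_castSucc_iff α).2 hbd))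
      all_goals simpa
  · intro hα
    refine ⟨fun u v huv hu hv => ?_, fun a b c d hab hbc hcd hac hbd => ?_⟩
    · obtain ⟨x, rfl⟩ := hcs hu
      obtain ⟨y, rfl⟩ := hcs hv
      rw [liftPerm_castSucc, Fin.castSucc_lt_castSucc_iff] at hu hv
      rw [hα.ascentUnique x y ((sameCycle_liftPerm_castSucc_iff α).1 huv) hu hv]
    · obtain ⟨a, rfl⟩ := hcs hab
      obtain ⟨b, rfl⟩ := hcs hbc
      obtain ⟨c, rfl⟩ := hcs hcd
      obtain ⟨d, rfl⟩ : ∃ x : Fin (n + 1), x.castSucc = d := by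
        refine Fin.exists_castSucc_eq.2 fun hd => (hbc.trans hcd).ne ?_
        exact hbd.eq_of_right (hd ▸ liftPerm_last α)
      rw [Fin.castSucc_lt_castSucc_iff] at hab hbc hcd
      rw [sameCycle_liftPerm_castSucc_iff] at hac hbd ⊢
      exact hα.orbitsNoncrossing a b c d hab hbc hcd hac hbd

theorem isStar_chainExt_iff : IsStar (chainExt α) ↔ IsStar α := by
  have hL : liftPerm α = swap (Fin.last _) (liftPerm α 0) * chainExt α := by
    rw [chainExt_eq_swap_mul, swap_mul_self_mul]
  have hJ : (chainExt α).SameCycle 0 (liftPerm α 0) :=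
    (sameCycle_chainExt_zero_last α).trans (chainExt_last α ▸ SameCycle.rfl.apply_right)
  rw [← isStar_liftPerm_iff α, hL, isStar_swap_last_mul_iff (chainExt_zero α) hJ]

end Constructions
section Tower

variable {n : ℕ}

theorem isStar_insPerm_iff (α : Perm (Fin (n + 1))) {j : Option (Fin (n + 1))}
    (hj : j = none ∨ ∃ j', j = some j' ∧ α.SameCycle 0 j') :
    IsStar (insPerm α j) ↔ IsStar α := by
  have hJ := (sameCycle_chainExt_zero_last α).trans ((sameCycle_chainExt_last_iff α j).2 hj)
  rw [insPerm_eq_swap_mul, isStar_swap_last_mul_iff (chainExt_zero α) hJ, isStar_chainExt_iff]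

theorem not_isStar_insPerm (α : Perm (Fin (n + 1))) {j : Option (Fin (n + 1))}
    (hj : ¬(j = none ∨ ∃ j', j = some j' ∧ α.SameCycle 0 j')) : ¬IsStar (insPerm α j) :=
  fun h => not_ascentUnique_swap_last_mul (chainExt_zero α)
    (mt (sameCycle_chainExt_last_iff α j).1 hj) (insPerm_eq_swap_mul α j ▸ h.ascentUnique)

theorem exists_insPerm_eq (β : Perm (Fin (n + 2))) : ∃ α j, insPerm α j = β := by
  set α := removeNone (finSuccEquivLast.permCongr (β * swap 0 (Fin.last _)))
  have hlift : liftPerm α = swap (Fin.last _) (β 0) * (β * swap 0 (Fin.last _)) := by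
    ext z
    have key := congrArg (· (β (swap 0 (Fin.last _) z)))
      (trans_swap_trans_symm (finSuccEquivLast (Fin.last (n + 1))) (finSuccEquivLast (β 0))
        finSuccEquivLast)
    simp only [Equiv.trans_apply, finSuccEquivLast_last, symm_apply_apply] at key
    simp [liftPerm, α, map_equiv_removeNone, key]
  refine ⟨α, finSuccEquivLast (β 0), ?_⟩
  rw [insPerm_eq_swap_mul, Equiv.symm_apply_apply, chainExt, hlift, ← mul_assoc, ← mul_assoc,
    swap_mul_self, one_mul, mul_assoc, swap_mul_self, mul_one]

end Tower

/-- With the degree `d` defined recursively over the cut-and-reconnect tower (`d` of the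
unique permutation of `S_1` is `2`; `d([α,j]) = d(α)+1` if `j = 0` (`none`) or `j` is
in the cycle of `α` containing the distinguished element `0`; `d([α,j]) = d(α)-1`
otherwise), a permutation `α ∈ S_{n+1}` attains the maximal degree `(n+1)+1` iff it
satisfies condition (*). -/
theorem degree_max_iff_star (d : ∀ n : ℕ, Equiv.Perm (Fin (n + 1)) → ℤ)
    (hbase : d 0 1 = 2)
    (hup : ∀ (n : ℕ) (α : Equiv.Perm (Fin (n + 1))) (j : Option (Fin (n + 1))),
      (j = none ∨ ∃ j', j = some j' ∧ α.SameCycle 0 j') →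
      d (n + 1) (insPerm α j) = d n α + 1)
    (hdown : ∀ (n : ℕ) (α : Equiv.Perm (Fin (n + 1))) (j : Option (Fin (n + 1))),
      ¬ (j = none ∨ ∃ j', j = some j' ∧ α.SameCycle 0 j') →
      d (n + 1) (insPerm α j) = d n α - 1) :
    ∀ (n : ℕ) (α : Equiv.Perm (Fin (n + 1))),
      SatisfiesStar α ↔ d n α = (n : ℤ) + 2 := by
  suffices key : ∀ n (α : Perm (Fin (n + 1))),
      d n α ≤ n + 2 ∧ (IsStar α ↔ d n α = n + 2) from
    fun n α => satisfiesStar_iff_isStar.trans (key n α).2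
  intro n
  induction n with
  | zero =>
    intro α
    rw [show α = 1 from Equiv.ext fun _ => Subsingleton.elim (α := Fin 1) _ _, hbase]
    exact ⟨le_rfl, iff_of_true (isStar_fin_one 1) rfl⟩
  | succ n ih =>
    intro β
    obtain ⟨α, j, rfl⟩ := exists_insPerm_eq β
    obtain ⟨hle, hiff⟩ := ih α
    by_cases hj : j = none ∨ ∃ j', j = some j' ∧ α.SameCycle 0 j'
    · rw [hup n α j hj, isStar_insPerm_iff α hj, hiff]
      push_cast
      exact ⟨by omega, ⟨fun _ => by omega, fun _ => by omega⟩⟩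
    · rw [hdown n α j hj]
      push_cast
      exact ⟨by omega, iff_of_false (not_isStar_insPerm α hj) (by omega)⟩
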